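/- The maximum of det B(A₈, x, y, 1) over all vectors x, y ∈ {0, 1}⁸, where A₈ is the upper-left 8 × 8 submatrix of A₁₅, equals 96, and this maximum is attained by the bordering that yields A₉ (the upper-left 9 × 9 submatrix of A₁₅). -/

import Mathlib

/-! Bordering `A` by a row `x`, a column `y` and a corner `z` gives, by the Schur complement,
`det B(A, x, y, z) = z det A - x ⬝ adj(A) y`. Along the chain `A_1 ⊂ ⋯ ⊂ A_9` this computes all
leading minors, each step using the adjugate of the previous minor. For `A_8` (determinant 40)
we get `det B(A_8, x, y, 1) = 40 - (x adj A_8) ⬝ y`; over `y ∈ {0,1}^8` the dot product is at least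
`∑ᵢ min((x adj A_8)ᵢ, 0)`, and a check of the 256 vectors `x` shows this is always `≥ -56`.
Hence the maximum is at most `96`, which `A_9` attains. -/

open Matrix

/-- The bordered matrix `B(A, x, y, z)`: upper-left `n × n` block `A`, first `n` entries of the
last column given by `y`, first `n` entries of the last row given by `x`, corner entry `z`. -/
def border {n : ℕ} (A : Matrix (Fin n) (Fin n) ℤ) (x y : Fin n → ℤ) (z : ℤ) :
    Matrix (Fin (n + 1)) (Fin (n + 1)) ℤ :=
  Matrix.of fun i j =>
    if hi : (i : ℕ) < n then
      if hj : (j : ℕ) < n then A ⟨i, hi⟩ ⟨j, hj⟩ else y ⟨i, hi⟩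
    else
      if hj : (j : ℕ) < n then x ⟨j, hj⟩ else z

/-- The matrix `A₁₅` from the paper. -/
def A15 : Matrix (Fin 15) (Fin 15) ℤ :=
  !![1, 0, 1, 1, 0, 0, 0, 0, 0, 0, 1, 0, 0, 1, 1;
      1, 1, 0, 0, 0, 1, 0, 1, 1, 1, 1, 0, 0, 0, 0;
      0, 1, 1, 0, 1, 0, 0, 1, 0, 0, 1, 1, 0, 1, 0;
      0, 1, 0, 1, 1, 1, 0, 0, 0, 0, 0, 0, 1, 0, 1;
      1, 0, 0, 0, 1, 1, 1, 1, 0, 0, 0, 0, 0, 1, 0;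
      0, 0, 1, 0, 0, 1, 1, 0, 1, 0, 0, 0, 1, 1, 0;
      0, 1, 0, 1, 0, 0, 1, 1, 0, 0, 1, 0, 1, 1, 0;
      0, 0, 1, 1, 0, 1, 0, 1, 0, 1, 0, 1, 1, 0, 0;
      0, 0, 0, 1, 1, 0, 0, 1, 1, 1, 0, 0, 0, 1, 1;
      1, 1, 1, 0, 1, 0, 1, 0, 0, 1, 0, 0, 1, 0, 0;
      0, 0, 0, 0, 1, 1, 1, 0, 0, 1, 1, 1, 0, 0, 1;
      1, 1, 0, 1, 0, 0, 1, 0, 1, 0, 0, 1, 0, 0, 0;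
      1, 0, 0, 0, 1, 0, 0, 1, 1, 0, 1, 1, 1, 0, 1;
      1, 1, 0, 0, 0, 1, 0, 0, 0, 1, 0, 1, 1, 1, 1;
      0, 1, 1, 0, 0, 0, 1, 1, 0, 0, 0, 0, 0, 0, 1]

/-- `Asub k h` is the upper-left `k × k` submatrix `A_k` of `A₁₅`. -/
def Asub (k : ℕ) (h : k ≤ 15) : Matrix (Fin k) (Fin k) ℤ :=
  A15.submatrix (Fin.castLE h) (Fin.castLE h)

theorem det_fromBlocks_replicateCol_replicateRow_of_field {K : Type*} [Field K]
    {m : Type*} [Fintype m] [DecidableEq m] {A : Matrix m m K} (hA : A.det ≠ 0)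
    (x y : m → K) (z : K) :
    (fromBlocks A (replicateCol (Fin 1) y) (replicateRow (Fin 1) x) (of fun _ _ => z)).det =
      z * A.det - x ⬝ᵥ A.adjugate *ᵥ y := by
  have := invertibleOfIsUnitDet A (isUnit_iff_ne_zero.mpr hA)
  have hschur : (replicateRow (Fin 1) x * ⅟A * replicateCol (Fin 1) y) 0 0 =
      A.det⁻¹ * x ⬝ᵥ A.adjugate *ᵥ y := by
    rw [invOf_eq_nonsing_inv, inv_def, Matrix.mul_smul, Matrix.smul_mul, Matrix.smul_apply,
      Matrix.mul_assoc, ← replicateCol_mulVec, replicateRow_mul_replicateCol_apply,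
      Ring.inverse_eq_inv', smul_eq_mul]
  rw [det_fromBlocks₁₁, det_unique (n := Fin 1), Matrix.sub_apply, Fin.default_eq_zero,
    hschur, of_apply]
  field_simp

theorem det_fromBlocks_replicateCol_replicateRow {R : Type*} [CommRing R] [IsDomain R]
    {m : Type*} [Fintype m] [DecidableEq m] {A : Matrix m m R} (hA : A.det ≠ 0)
    (x y : m → R) (z : R) :
    (fromBlocks A (replicateCol (Fin 1) y) (replicateRow (Fin 1) x) (of fun _ _ => z)).det =
      z * A.det - x ⬝ᵥ A.adjugate *ᵥ y := by
  let f := algebraMap R (FractionRing R)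
  have hf : Function.Injective f := IsFractionRing.injective R (FractionRing R)
  have hfA : (f.mapMatrix A).det ≠ 0 := by
    rwa [← RingHom.map_det, ne_eq, map_eq_zero_iff f hf]
  apply hf
  convert det_fromBlocks_replicateCol_replicateRow_of_field hfA (f ∘ x) (f ∘ y) (f z) using 1
  · rw [RingHom.map_det, RingHom.mapMatrix_apply, fromBlocks_map]
    rfl
  · rw [map_sub, map_mul, RingHom.map_det, RingHom.map_dotProduct, ← RingHom.map_adjugate]
    congr 2
    ext i
    exact RingHom.map_mulVec f _ _ i

theorem adjugate_eq_of_mul_eq_det_smul {R : Type*} [CommRing R] [IsDomain R]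
    {m : Type*} [Fintype m] [DecidableEq m] {A M : Matrix m m R} (hA : A.det ≠ 0)
    (hM : A * M = A.det • 1) : A.adjugate = M := by
  refine smul_right_injective _ hA ?_
  calc A.det • A.adjugate = A.adjugate * (A * M) := by
        rw [hM, Matrix.mul_smul, Matrix.mul_one]
    _ = A.det • M := by
        rw [← Matrix.mul_assoc, adjugate_mul, Matrix.smul_mul, Matrix.one_mul]

theorem border_eq_reindex_fromBlocks {n : ℕ} (A : Matrix (Fin n) (Fin n) ℤ)
    (x y : Fin n → ℤ) (z : ℤ) : border A x y z = reindex finSumFinEquiv finSumFinEquiv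
      (fromBlocks A (replicateCol (Fin 1) y) (replicateRow (Fin 1) x) (of fun _ _ => z)) := by
  ext i j
  refine Fin.lastCases ?_ (fun i => ?_) i <;> refine Fin.lastCases ?_ (fun j => ?_) j <;>
    simp only [reindex_apply, submatrix_apply, finSumFinEquiv_symm_last,
      finSumFinEquiv_symm_apply_castSucc] <;> simp [border]

theorem det_border {n : ℕ} {A : Matrix (Fin n) (Fin n) ℤ} (hA : A.det ≠ 0)
    (x y : Fin n → ℤ) (z : ℤ) : (border A x y z).det = z * A.det - x ⬝ᵥ A.adjugate *ᵥ y := by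
  rw [border_eq_reindex_fromBlocks, det_reindex_self,
    det_fromBlocks_replicateCol_replicateRow hA]

theorem det_border_of_mul_eq_det_smul {n : ℕ} {A M : Matrix (Fin n) (Fin n) ℤ}
    (hA : A.det ≠ 0) (hM : A * M = A.det • 1) (x y : Fin n → ℤ) (z : ℤ) :
    (border A x y z).det = z * A.det - x ⬝ᵥ M *ᵥ y := by
  rw [det_border hA, adjugate_eq_of_mul_eq_det_smul hA hM]

theorem border_Asub_eq_Asub_succ (k : ℕ) (hk : k < 15) :
    border (Asub k hk.le) (fun j => A15 ⟨k, hk⟩ (Fin.castLE hk.le j))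
      (fun i => A15 (Fin.castLE hk.le i) ⟨k, hk⟩) (A15 ⟨k, hk⟩ ⟨k, hk⟩) =
      Asub (k + 1) hk := by
  ext i j
  refine Fin.lastCases ?_ (fun i => ?_) i <;> refine Fin.lastCases ?_ (fun j => ?_) j <;>
    simp [border, Asub] <;> rfl

theorem det_Asub_succ {k : ℕ} (hk : k < 15) {d : ℤ} (M : Matrix (Fin k) (Fin k) ℤ)
    (hdet : (Asub k hk.le).det = d) (hd : d ≠ 0) (hM : Asub k hk.le * M = d • 1) :
    (Asub (k + 1) hk).det = A15 ⟨k, hk⟩ ⟨k, hk⟩ * d -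
      (fun j => A15 ⟨k, hk⟩ (Fin.castLE hk.le j)) ⬝ᵥ
        M *ᵥ (fun i => A15 (Fin.castLE hk.le i) ⟨k, hk⟩) := by
  subst hdet
  rw [← border_Asub_eq_Asub_succ, det_border_of_mul_eq_det_smul hd hM]

-- Adjugates of `A_1, …, A_8`, computed outside Lean; only `A_k * adjAk = det A_k • 1`
-- is checked.
def adjA1 : Matrix (Fin 1) (Fin 1) ℤ :=
  !![1]

def adjA2 : Matrix (Fin 2) (Fin 2) ℤ :=
  !![1, 0;
    -1, 1]

def adjA3 : Matrix (Fin 3) (Fin 3) ℤ :=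
  !![1, 1, -1;
    -1, 1, 1;
    1, -1, 1]

def adjA4 : Matrix (Fin 4) (Fin 4) ℤ :=
  !![1, 2, -1, -1;
    -1, 1, 1, 1;
    1, -1, 2, -1;
    1, -1, -1, 2]

def adjA5 : Matrix (Fin 5) (Fin 5) ℤ :=
  !![1, 2, -1, -1, 2;
    -1, 3, 1, 1, -2;
    2, -1, 3, -2, -1;
    2, -1, -2, 3, -1;
    -1, -2, 1, 1, 3]

def adjA6 : Matrix (Fin 6) (Fin 6) ℤ :=
  !![3, 3, 0, -3, 3, -3;
    -1, 5, 3, 1, -4, -2;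
    2, -1, 3, -2, -1, 4;
    4, -2, -3, 5, -2, -1;
    -1, -4, 3, 1, 5, -2;
    -2, 1, -3, 2, 1, 5]

def adjA7 : Matrix (Fin 7) (Fin 7) ℤ :=
  !![6, 6, 0, -6, 6, -6, 0;
    -4, 8, 6, -2, -4, -2, 6;
    5, -1, 6, -2, -4, 7, -3;
    7, -5, -6, 8, -2, -1, 3;
    -1, -7, 6, 4, 8, -5, -3;
    -2, 4, -6, 8, -2, 8, -6;
    -3, -3, 0, -6, 6, 3, 9]

def adjA8 : Matrix (Fin 8) (Fin 8) ℤ :=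
  !![20, 12, -4, -4, 8, -4, -4, -12;
    0, 16, 8, 8, -16, 8, 8, -16;
    10, -2, 14, -6, -8, 14, -6, 2;
    10, -10, -10, 10, 0, -10, 10, 10;
    0, -16, 12, 12, 16, -8, -8, -4;
    -10, 10, -10, 10, 0, 10, -10, 10;
    0, -8, -4, -4, 8, 16, 16, -12;
    -10, 2, 6, -14, 8, -14, 6, 18]

theorem det_Asub_one : (Asub 1 (by norm_num)).det = 1 := by decide

theorem det_Asub_two : (Asub 2 (by norm_num)).det = 1 := by
  rw [det_Asub_succ (by norm_num) adjA1 det_Asub_one one_ne_zero (by decide)]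
  decide

theorem det_Asub_three : (Asub 3 (by norm_num)).det = 2 := by
  rw [det_Asub_succ (by norm_num) adjA2 det_Asub_two one_ne_zero (by decide)]
  decide

theorem det_Asub_four : (Asub 4 (by norm_num)).det = 3 := by
  rw [det_Asub_succ (by norm_num) adjA3 det_Asub_three two_ne_zero (by decide)]
  decide

theorem det_Asub_five : (Asub 5 (by norm_num)).det = 5 := by
  rw [det_Asub_succ (by norm_num) adjA4 det_Asub_four three_ne_zero (by decide)]
  decide

theorem det_Asub_six : (Asub 6 (by norm_num)).det = 9 := by
  rw [det_Asub_succ (by norm_num) adjA5 det_Asub_five (by decide) (by decide)]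
  decide

theorem det_Asub_seven : (Asub 7 (by norm_num)).det = 18 := by
  rw [det_Asub_succ (by norm_num) adjA6 det_Asub_six (by decide) (by decide)]
  decide

theorem det_Asub_eight : (Asub 8 (by norm_num)).det = 40 := by
  rw [det_Asub_succ (by norm_num) adjA7 det_Asub_seven (by decide) (by decide)]
  decide

theorem Asub_eight_mul_adjA8 : Asub 8 (by norm_num) * adjA8 = (40 : ℤ) • 1 := by decide

theorem det_Asub_nine : (Asub 9 (by norm_num)).det = 96 := by
  rw [det_Asub_succ (by norm_num) adjA8 det_Asub_eight (by decide) Asub_eight_mul_adjA8]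
  decide

theorem border_Asub_eight_eq_Asub_nine :
    border (Asub 8 (by norm_num))
        (fun j => A15 ⟨8, by norm_num⟩ (Fin.castLE (by norm_num) j))
        (fun i => A15 (Fin.castLE (by norm_num) i) ⟨8, by norm_num⟩) 1
      = Asub 9 (by norm_num) := by
  convert border_Asub_eq_Asub_succ 8 (by norm_num) using 2
  rfl

theorem sum_min_zero_le_dotProduct {R : Type*} [Semiring R] [LinearOrder R]
    [IsOrderedAddMonoid R] {n : Type*} [Fintype n] (c y : n → R)
    (hy : ∀ i, y i = 0 ∨ y i = 1) : ∑ i, min (c i) 0 ≤ c ⬝ᵥ y := by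
  refine Finset.sum_le_sum fun i _ => ?_
  rcases hy i with h | h
  · rw [h, mul_zero]
    exact min_le_right _ _
  · rw [h, mul_one]
    exact min_le_left _ _

theorem exists_bool_of_forall_eq_zero_or_eq_one {R : Type*} [Zero R] [One R] {n : Type*}
    {x : n → R} (hx : ∀ i, x i = 0 ∨ x i = 1) :
    ∃ b : n → Bool, x = fun i => if b i then 1 else 0 := by
  classical
  refine ⟨fun i => decide (x i = 1), funext fun i => ?_⟩
  rcases hx i with h | h <;> simp [h]

set_option maxRecDepth 100000 in
theorem neg_56_le_sum_min_vecMul_adjA8 (b : Fin 8 → Bool) :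
    (-56 : ℤ) ≤ ∑ i, min (((fun j => if b j then 1 else 0) ᵥ* adjA8) i) 0 := by
  revert b
  decide

/-- The maximum of `det B(A_8, x, y, 1)` over `x, y ∈ {0, 1}^8` equals `96`, and it is
attained by the bordering of `A_8` that yields `A_9`. -/
theorem border_max_8 :
    IsGreatest {d : ℤ | ∃ x y : Fin 8 → ℤ,
        (∀ i, x i = 0 ∨ x i = 1) ∧ (∀ i, y i = 0 ∨ y i = 1) ∧
        d = (border (Asub 8 (by norm_num)) x y 1).det} 96 ∧
    border (Asub 8 (by norm_num))
        (fun j => A15 ⟨8, by norm_num⟩ (Fin.castLE (by norm_num) j))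
        (fun i => A15 (Fin.castLE (by norm_num) i) ⟨8, by norm_num⟩) 1
      = Asub 9 (by norm_num) ∧
    (Asub 9 (by norm_num)).det = 96 := by
  have det_border_eight (x y : Fin 8 → ℤ) :
      (border (Asub 8 (by norm_num)) x y 1).det = 40 - x ᵥ* adjA8 ⬝ᵥ y := by
    rw [det_border_of_mul_eq_det_smul (by rw [det_Asub_eight]; decide)
      (by rw [det_Asub_eight]; exact Asub_eight_mul_adjA8), det_Asub_eight, one_mul,
      dotProduct_mulVec]
  have border_nine := border_Asub_eight_eq_Asub_nine
  have det_nine := (congrArg det border_nine).trans det_Asub_nine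
  refine ⟨⟨⟨_, _, by decide, by decide, det_nine.symm⟩, ?_⟩, border_nine, det_Asub_nine⟩
  rintro _ ⟨x, y, hx, hy, rfl⟩
  obtain ⟨b, rfl⟩ := exists_bool_of_forall_eq_zero_or_eq_one hx
  rw [det_border_eight]
  linarith [(neg_56_le_sum_min_vecMul_adjA8 b).trans (sum_min_zero_le_dotProduct _ y hy)]
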